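/- Let g ≥ 2 and n ≥ 2 be integers and let a_1,…,a_n be nonnegative integers with a_1+⋯+a_n = 2g−3+n; set P_{n,n+1} := 0. Then the following are equivalent: (i) for every t with 0 ≤ t ≤ n, P_{n,t} = (−1)^t·[ (C(n−1,t) − C(n−1,t−1))·(2g−3+n+t) + 2(t−1)·C(n−1,t−1) ]·A_n; (ii) for every t with 0 ≤ t ≤ n, (t+1)·P_{n,t+1} + (n−(t+1))·P_{n,t} = ((−1)^t·(2g−1)/(2g−3+n))·C(n,t)·P_{n,0}. -/

import Mathlib

open Finset

/-- Binomial coefficient with integer lower index: `0` if the lower index is negative. -/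
def zbinom (m : ℕ) (r : ℤ) : ℤ :=
  if 0 ≤ r then (m.choose r.toNat : ℤ) else 0

/-- Ordered `k`-tuples of pairwise disjoint nonempty subsets of `{1,…,n}` with union `{1,…,n}`. -/
def Parts (n k : ℕ) : Finset (Fin k → Finset (Fin n)) :=
  Finset.univ.filter fun I =>
    (∀ j, I j ≠ ∅) ∧ (∀ j j', j ≠ j' → Disjoint (I j) (I j')) ∧
      Finset.univ.biUnion I = Finset.univ

/-- The double factorial ratio `(2d-1)!! / (2d+1-2c)!! = ∏_{i=1}^{c-1} (2d+1-2i)`. -/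
def dfRatio (d c : ℕ) : ℤ := ∏ i ∈ Finset.range (c - 1), (2 * (d : ℤ) + 1 - 2 * (i + 1))

/-- The polynomial `P_{n,t}(a_1,…,a_n)` of the paper (with `g` implicit in the notation there). -/
def Pnt (g n t : ℕ) (a : Fin n → ℕ) : ℚ :=
  ∑ k ∈ Finset.Icc 1 n,
    ((-1) ^ k * (Nat.factorial (2 * g - 3 + k) : ℚ) / (Nat.factorial k : ℚ)) *
      ∑ I ∈ Parts n k,
        ∑ d ∈ Finset.Nat.antidiagonalTuple k (g - 2 + n),
          ∑ A ∈ Finset.powersetCard (n - t) (Finset.univ : Finset (Fin k)),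
            ∏ j, ((zbinom (2 * (∑ ℓ ∈ I j, a ℓ)) (2 * (d j : ℤ) - if j ∈ A then 1 else 0) : ℚ) *
              (dfRatio (d j) (I j).card : ℚ))

/-- `A_n(a_1,…,a_n)` of the paper. -/
def An (g n : ℕ) (a : Fin n → ℕ) : ℚ :=
  (-1) ^ n * (Nat.factorial (2 * g - 4 + n) : ℚ) *
    ∑ o ∈ (Finset.Nat.antidiagonalTuple n (2 * g - 4 + n)).filter (fun o => ∀ j, Odd (o j)),
      ∏ j, (Nat.choose (2 * a j) (o j) : ℚ)

/-!
Only the term `k = n` of `P_{n,0}` survives, since `|A| = n ≤ k`. For `k = n` the ordered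
partitions are the permutations placed into singletons, and after the substitution `o = 2d - 1`
each of the `n!` permutations contributes the sum defining `A_n`; hence
`P_{n,0} = (2g-3+n) A_n`. The closed form in (i) satisfies the recurrence in (ii), by absorption
`(r+1) C(m,r+1) = (m-r) C(m,r)` and Pascal's rule, and it vanishes at `t = n + 1`. As the leading
coefficient `t + 1` never vanishes, a solution of the recurrence on `0, …, n` is determined by
its value at `t = 0`, which gives both directions.
-/

lemma zbinom_natCast (m k : ℕ) : zbinom m k = m.choose k := by
  simp [zbinom]

lemma zbinom_of_neg (m : ℕ) {r : ℤ} (hr : r < 0) : zbinom m r = 0 := by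
  simp [zbinom, not_le.mpr hr]

lemma zbinom_of_lt (m : ℕ) {r : ℤ} (hr : (m : ℤ) < r) : zbinom m r = 0 := by
  lift r to ℕ using by omega
  rw [zbinom_natCast, Nat.choose_eq_zero_of_lt (by omega), Nat.cast_zero]

lemma succ_mul_zbinom_succ (m : ℕ) (r : ℤ) :
    (r + 1) * zbinom m (r + 1) = (m - r) * zbinom m r := by
  rcases lt_or_ge r 0 with hr | hr
  · rw [zbinom_of_neg m hr, mul_zero]
    rcases (by omega : r + 1 < 0 ∨ r + 1 = 0) with hr' | hr'
    · rw [zbinom_of_neg m hr', mul_zero]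
    · rw [hr', zero_mul]
  lift r to ℕ using hr
  rcases le_or_gt r m with hrm | hrm
  · have h := congrArg (Nat.cast : ℕ → ℤ) (Nat.choose_succ_right_eq m r)
    push_cast [Nat.cast_sub hrm] at h
    rw [← Nat.cast_succ, zbinom_natCast, zbinom_natCast]
    push_cast
    linarith
  · rw [zbinom_of_lt m (by omega), zbinom_of_lt m (by omega), mul_zero, mul_zero]

lemma zbinom_add_zbinom_sub_one (m : ℕ) (r : ℤ) :
    zbinom m r + zbinom m (r - 1) = zbinom (m + 1) r := by
  rcases lt_or_ge r 0 with hr | hr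
  · rw [zbinom_of_neg _ hr, zbinom_of_neg _ hr, zbinom_of_neg _ (by omega), add_zero]
  lift r to ℕ using hr
  cases r with
  | zero => simp [zbinom]
  | succ k =>
    rw [Nat.cast_succ, add_sub_cancel_right, ← Nat.cast_succ, zbinom_natCast, zbinom_natCast,
      zbinom_natCast, Nat.choose_succ_succ' m k, Nat.cast_add, add_comm]

def pntClosedForm (g n : ℕ) (A : ℚ) (t : ℕ) : ℚ :=
  (-1 : ℚ) ^ t * (((zbinom (n - 1) (t : ℤ) : ℚ) - (zbinom (n - 1) ((t : ℤ) - 1) : ℚ))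
        * (2 * (g : ℚ) - 3 + n + t)
      + 2 * ((t : ℚ) - 1) * (zbinom (n - 1) ((t : ℤ) - 1) : ℚ)) * A

lemma pntClosedForm_zero (g n : ℕ) (A : ℚ) :
    pntClosedForm g n A 0 = (2 * (g : ℚ) - 3 + n) * A := by
  norm_num [pntClosedForm, zbinom]

lemma pntClosedForm_succ_self (g : ℕ) {n : ℕ} (hn : 1 ≤ n) (A : ℚ) :
    pntClosedForm g n A (n + 1) = 0 := by
  rw [pntClosedForm, zbinom_of_lt _ (by omega), zbinom_of_lt _ (by omega)]
  ring

lemma pntClosedForm_recurrence (g : ℕ) {n : ℕ} (hn : 1 ≤ n) (A : ℚ) (t : ℕ) :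
    ((t : ℚ) + 1) * pntClosedForm g n A (t + 1) + ((n : ℚ) - ((t : ℚ) + 1)) * pntClosedForm g n A t
      = (-1 : ℚ) ^ t * (2 * (g : ℚ) - 1) * (n.choose t : ℚ) * A := by
  obtain ⟨m, rfl⟩ : ∃ m, n = m + 1 := ⟨n - 1, by omega⟩
  have absorb : ((t : ℚ) + 1) * zbinom m (t + 1) = (m - t) * zbinom m t := by
    exact_mod_cast succ_mul_zbinom_succ m t
  have absorb_pred : (t : ℚ) * zbinom m t = (m - (t - 1)) * zbinom m (t - 1) := by
    exact_mod_cast sub_add_cancel (t : ℤ) 1 ▸ succ_mul_zbinom_succ m (t - 1)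
  have pascal : (zbinom m t : ℚ) + zbinom m (t - 1) = (m + 1).choose t := by
    exact_mod_cast zbinom_natCast (m + 1) t ▸ zbinom_add_zbinom_sub_one m t
  simp only [pntClosedForm, Nat.add_sub_cancel, Nat.cast_succ, add_sub_cancel_right]
  linear_combination (-1 : ℚ) ^ t * A *
    (-(2 * (g : ℚ) - 1 + m + t) * absorb + (2 * (g : ℚ) - 1 + m - t) * absorb_pred
      + (2 * (g : ℚ) - 1) * pascal)

lemma eqOn_iff_recurrence {n : ℕ} {p f b r : ℕ → ℚ}
    (hf : ∀ t ≤ n, ((t : ℚ) + 1) * f (t + 1) + b t * f t = r t) (h0 : p 0 = f 0)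
    (htop : f (n + 1) = 0) :
    (∀ t ≤ n, p t = f t) ↔
      ∀ t ≤ n, ((t : ℚ) + 1) * (if t + 1 ≤ n then p (t + 1) else 0) + b t * p t = r t := by
  constructor
  · intro h t ht
    rw [h t ht, ← hf t ht]
    split_ifs with ht'
    · rw [h (t + 1) ht']
    · rw [show t = n by omega, htop]
  · intro h t
    induction t with
    | zero => exact fun _ => h0
    | succ t ih =>
      intro ht
      have hrec := h t (by omega)
      rw [if_pos ht, ih (by omega), ← hf t (by omega)] at hrec
      exact mul_left_cancel₀ (by positivity) (add_right_cancel hrec)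

lemma dfRatio_one (d : ℕ) : dfRatio d 1 = 1 := rfl

lemma exists_perm_of_mem_Parts_self {n : ℕ} {I : Fin n → Finset (Fin n)} (hI : I ∈ Parts n n) :
    ∃ σ : Equiv.Perm (Fin n), I = fun j => {σ j} := by
  simp only [Parts, mem_filter, mem_univ, true_and] at hI
  obtain ⟨hne, hdisj, -⟩ := hI
  choose y hy using fun j => nonempty_iff_ne_empty.mpr (hne j)
  have hunique : ∀ {j j' x}, x ∈ I j → x ∈ I j' → j = j' := fun hx hx' =>
    by_contra fun h => disjoint_left.mp (hdisj _ _ h) hx hx'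
  have hinj : Function.Injective y := fun j j' h => hunique (hy j) (h ▸ hy j')
  refine ⟨Equiv.ofBijective y (Finite.injective_iff_bijective.mp hinj), funext fun j => ?_⟩
  ext x
  obtain ⟨i, rfl⟩ := (Finite.injective_iff_surjective.mp hinj) x
  simp only [Equiv.ofBijective_apply, mem_singleton]
  exact ⟨fun hx => congrArg y (hunique (hy i) hx), fun h => hinj h ▸ hy j⟩

lemma sum_Parts_self {M : Type*} [AddCommMonoid M] (n : ℕ) (G : (Fin n → Finset (Fin n)) → M) :
    ∑ I ∈ Parts n n, G I = ∑ σ : Equiv.Perm (Fin n), G fun j => {σ j} := by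
  symm
  refine sum_bij (fun σ _ j => {σ j}) (fun σ _ => ?_) (fun σ _ τ _ h => ?_) (fun I hI => ?_)
    (fun _ _ => rfl)
  · simp only [Parts, mem_filter, mem_univ, true_and]
    refine ⟨fun j => singleton_ne_empty _,
      fun j j' h => disjoint_singleton.mpr (σ.injective.ne h), ?_⟩
    ext x
    simpa using ⟨σ.symm x, by simp⟩
  · exact Equiv.ext fun j => singleton_inj.mp (congrFun h j)
  · obtain ⟨σ, rfl⟩ := exists_perm_of_mem_Parts_self hI
    exact ⟨σ, mem_univ _, rfl⟩

lemma sum_antidiagonalTuple_prod_comp_perm {R : Type*} [CommSemiring R] {k N : ℕ}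
    (σ : Equiv.Perm (Fin k)) (h : Fin k → ℕ → R) :
    ∑ d ∈ Nat.antidiagonalTuple k N, ∏ j, h (σ j) (d j)
      = ∑ d ∈ Nat.antidiagonalTuple k N, ∏ j, h j (d j) := by
  refine sum_nbij' (fun d => d ∘ σ.symm) (fun d => d ∘ σ) (fun d hd => ?_) (fun d hd => ?_)
    (fun d _ => ?_) (fun d _ => ?_) (fun d _ => ?_)
  · simpa [Nat.mem_antidiagonalTuple, Equiv.sum_comp] using hd
  · simpa [Nat.mem_antidiagonalTuple, Equiv.sum_comp] using hd
  · ext j; simp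
  · ext j; simp
  · exact Fintype.prod_equiv σ _ _ fun j => by simp

/-- Substituting `o = 2d - 1`; tuples with some `d j = 0` contribute `0`. -/
lemma sum_antidiagonalTuple_prod_zbinom_two_mul_sub_one {R : Type*} [CommRing R] {k N M : ℕ}
    (hNM : 2 * N = M + k) (m : Fin k → ℕ) :
    ∑ d ∈ Nat.antidiagonalTuple k N, ∏ j, (zbinom (m j) (2 * (d j : ℤ) - 1) : R)
      = ∑ o ∈ (Nat.antidiagonalTuple k M).filter (fun o => ∀ j, Odd (o j)),
          ∏ j, ((m j).choose (o j) : R) := by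
  rw [← sum_filter_of_ne (p := fun d : Fin k → ℕ => ∀ j, 1 ≤ d j) ?vanish]
  case vanish =>
    intro d _ hne j
    by_contra h0
    exact hne (prod_eq_zero (mem_univ j) (by simp [zbinom, show d j = 0 by omega]))
  refine sum_nbij' (fun d j => 2 * d j - 1) (fun o j => o j / 2 + 1) (fun d hd => ?_)
    (fun o ho => ?_) (fun d hd => ?_) (fun o ho => ?_) (fun d hd => ?_) <;> beta_reduce
  · obtain ⟨hsum, hpos⟩ := mem_filter.mp hd
    refine mem_filter.mpr ⟨Nat.mem_antidiagonalTuple.mpr ?_,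
      fun j => Nat.odd_iff.mpr (by have := hpos j; dsimp only; omega)⟩
    have h2 : ∑ j, (2 * d j - 1 + 1) = ∑ j, 2 * d j :=
      sum_congr rfl fun j _ => by have := hpos j; omega
    rw [sum_add_distrib, ← mul_sum, Nat.mem_antidiagonalTuple.mp hsum] at h2
    simp only [sum_const, card_univ, Fintype.card_fin, smul_eq_mul, mul_one] at h2
    omega
  · obtain ⟨hsum, hodd⟩ := mem_filter.mp ho
    refine mem_filter.mpr ⟨Nat.mem_antidiagonalTuple.mpr ?_, fun _ => Nat.le_add_left 1 _⟩
    have h2 : ∑ j, 2 * (o j / 2 + 1) = ∑ j, (o j + 1) :=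
      sum_congr rfl fun j _ => by have := Nat.odd_iff.mp (hodd j); omega
    rw [← mul_sum, sum_add_distrib (f := o), Nat.mem_antidiagonalTuple.mp hsum] at h2
    simp only [sum_const, card_univ, Fintype.card_fin, smul_eq_mul, mul_one] at h2
    omega
  · ext j; have := (mem_filter.mp hd).2 j; omega
  · ext j; have := Nat.odd_iff.mp ((mem_filter.mp ho).2 j); omega
  · refine prod_congr rfl fun j _ => ?_
    have := (mem_filter.mp hd).2 j
    rw [show 2 * (d j : ℤ) - 1 = ((2 * d j - 1 : ℕ) : ℤ) by omega, zbinom_natCast,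
      Int.cast_natCast]

lemma Pnt_zero {g n : ℕ} (hg : 2 ≤ g) (hn : 1 ≤ n) (a : Fin n → ℕ) :
    Pnt g n 0 a = (2 * (g : ℚ) - 3 + n) * An g n a := by
  rw [Pnt, sum_eq_single_of_mem n (mem_Icc.mpr ⟨hn, le_rfl⟩) fun k hk hkn => ?_]
  swap
  · rw [powersetCard_eq_empty.mpr (by simp only [card_univ, Fintype.card_fin]; grind)]
    simp only [sum_empty, sum_const_zero, mul_zero]
  have hA : powersetCard (n - 0) (univ : Finset (Fin n)) = {univ} := by
    simpa using powersetCard_self (univ : Finset (Fin n))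
  simp only [hA, sum_singleton, mem_univ, if_true]
  rw [sum_Parts_self]
  simp only [sum_singleton, card_singleton, dfRatio_one, Int.cast_one, mul_one]
  rw [sum_congr rfl fun σ _ =>
      sum_antidiagonalTuple_prod_comp_perm σ fun i e => (zbinom (2 * a i) (2 * (e : ℤ) - 1) : ℚ),
    sum_const, card_univ, Fintype.card_perm, Fintype.card_fin, nsmul_eq_mul,
    sum_antidiagonalTuple_prod_zbinom_two_mul_sub_one (M := 2 * g - 4 + n) (by omega), An,
    show 2 * g - 3 + n = (2 * g - 4 + n) + 1 by omega, Nat.factorial_succ]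
  push_cast [show 4 ≤ 2 * g by omega]
  field_simp
  ring

theorem statement10_general (g n : ℕ) (hg : 2 ≤ g) (hn : 2 ≤ n) (a : Fin n → ℕ) :
    (∀ t ≤ n, Pnt g n t a
        = (-1 : ℚ) ^ t * (((zbinom (n - 1) (t : ℤ) : ℚ) - (zbinom (n - 1) ((t : ℤ) - 1) : ℚ))
              * (2 * (g : ℚ) - 3 + n + t)
            + 2 * ((t : ℚ) - 1) * (zbinom (n - 1) ((t : ℤ) - 1) : ℚ)) * An g n a)
    ↔ (∀ t ≤ n,
        ((t : ℚ) + 1) * (if t + 1 ≤ n then Pnt g n (t + 1) a else 0)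
            + ((n : ℚ) - ((t : ℚ) + 1)) * Pnt g n t a
          = (-1 : ℚ) ^ t * (2 * (g : ℚ) - 1) / (2 * (g : ℚ) - 3 + n)
              * (Nat.choose n t : ℚ) * Pnt g n 0 a) := by
  have hP0 := Pnt_zero hg (by omega : 1 ≤ n) a
  have hc : (2 * (g : ℚ) - 3 + n) ≠ 0 := by
    have : (2 : ℚ) ≤ g := by exact_mod_cast hg
    have : (0 : ℚ) ≤ n := n.cast_nonneg
    exact (by linarith : (0 : ℚ) < _).ne'
  refine eqOn_iff_recurrence (p := fun t => Pnt g n t a) (f := pntClosedForm g n (An g n a))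
    (fun t _ => ?_) (hP0.trans (pntClosedForm_zero g n _).symm)
    (pntClosedForm_succ_self g (by omega) _)
  rw [pntClosedForm_recurrence g (by omega), hP0]
  field_simp

theorem statement10 (g n : ℕ) (hg : 2 ≤ g) (hn : 2 ≤ n) (a : Fin n → ℕ)
    (ha : ∑ j, a j = 2 * g - 3 + n) :
    (∀ t ≤ n, Pnt g n t a
        = (-1 : ℚ) ^ t * (((zbinom (n - 1) (t : ℤ) : ℚ) - (zbinom (n - 1) ((t : ℤ) - 1) : ℚ))
              * (2 * (g : ℚ) - 3 + n + t)
            + 2 * ((t : ℚ) - 1) * (zbinom (n - 1) ((t : ℤ) - 1) : ℚ)) * An g n a)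
    ↔ (∀ t ≤ n,
        ((t : ℚ) + 1) * (if t + 1 ≤ n then Pnt g n (t + 1) a else 0)
            + ((n : ℚ) - ((t : ℚ) + 1)) * Pnt g n t a
          = (-1 : ℚ) ^ t * (2 * (g : ℚ) - 1) / (2 * (g : ℚ) - 3 + n)
              * (Nat.choose n t : ℚ) * Pnt g n 0 a) :=
  statement10_general g n hg hn a
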